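/- arXiv:quant-ph/9904065 — 3 statements merged into one kernel-verified Lean document; each statement's English description precedes it below -/
import Mathlib

section
/- Let G be the 3×3 complex matrix with rows (‖α‖², −Ω/2, −Ω/2), (−e^{iβ}⟨α|ΔSλ⟩ + Ω, b, 0), (−e^{−iβ}⟨ΔSλ|α⟩ + Ω, 0, b̄), where b = (κ²/2)‖α‖² − i(Δω − Im⟨S⁺λ|P_α S⁻λ⟩), Ω = 2|⟨α|S⁻λ⟩|, β = arg{−⟨S⁻λ|α⟩}. Then det G = ‖α‖²[(Δω)² + Γ²/4] where Γ² = κ⁴‖α‖⁴ + 4κ²‖α‖² Re⟨S⁻λ|P_α(S⁺+S⁻)λ⟩ − 4(Im⟨S⁺λ|P_α S⁻λ⟩)². -/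
/-!
Write `c = ⟨S⁻λ|α⟩` and `u = ⟨α|S⁺λ⟩`. The phase `β` is chosen so that `Ω e^{iβ} = -2c`;
with it the products of the off-diagonal entries of the arrowhead matrix `G` collapse to
`-c(u + c̄)` and its conjugate, so `det G = ‖α‖²|b|² + 2 Re(c(u + c̄) b̄)`. Matrix elements of
`‖α‖² P_α` are products of inner products with `α`, which identifies `Re(c(u + c̄))` and
`Im(cu)` with `‖α‖² Re⟨S⁻λ|P_α(S⁺+S⁻)λ⟩` and `-‖α‖² Im⟨S⁺λ|P_α S⁻λ⟩`; expanding `|b|²` then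
gives the formula.
-/

open Complex

/-- The orthogonal projection `P_α` onto the span of the (nonzero) vector `α`:
`P_α x = ⟨α̃|x⟩ α̃` with `α̃ = α/‖α‖`. -/
noncomputable def projAlpha {Z : Type*} [NormedAddCommGroup Z] [InnerProductSpace ℂ Z]
    (α x : Z) : Z :=
  (inner ℂ (((‖α‖ : ℝ)⁻¹ : ℂ) • α) x : ℂ) • (((‖α‖ : ℝ)⁻¹ : ℂ) • α)

open ComplexConjugate

theorem Matrix.det_fin_three_arrowhead {R : Type*} [CommRing R] (a p q r d s e : R) :
    !![a, p, q; r, d, 0; s, 0, e].det = a * d * e - p * r * e - q * s * d := by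
  rw [Matrix.det_fin_three]
  simp only [Matrix.of_apply, Matrix.cons_val', Matrix.cons_val_zero, Matrix.cons_val_one,
    Matrix.cons_val, Matrix.cons_val_fin_one]
  ring

namespace Complex

theorem norm_mul_exp_I_mul_arg (z : ℂ) : ‖z‖ * exp (I * arg z) = z := by
  rw [mul_comm I, norm_mul_exp_arg_mul_I]

theorem norm_mul_exp_neg_I_mul_arg (z : ℂ) : ‖z‖ * exp (-(I * arg z)) = conj z := by
  conv_rhs => rw [← norm_mul_exp_I_mul_arg z]
  rw [map_mul, conj_ofReal, ← exp_conj, map_mul, conj_ofReal, conj_I, neg_mul]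

theorem two_mul_ofReal_mul_im_mul_I {r : ℝ} {z w : ℂ} (h : r * z = w) :
    2 * r * z.im * I = w - conj w := by
  rw [← h, map_mul, conj_ofReal, ← mul_sub, sub_conj]
  push_cast
  ring

theorem two_mul_ofReal_mul_re {r : ℝ} {z w : ℂ} (h : r * z = w) :
    2 * r * z.re = w + conj w := by
  rw [← h, map_mul, conj_ofReal, ← mul_add, add_conj]
  push_cast
  ring

theorem ofReal_sq_eq_four_mul_mul_conj {Ω : ℝ} {c : ℂ} (hΩ : Ω = 2 * ‖c‖) :
    (Ω : ℂ) ^ 2 = 4 * (c * conj c) := by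
  rw [hΩ, mul_conj, normSq_eq_norm_sq]
  push_cast
  ring

theorem neg_half_mul_exp_I_mul_add {Ω β : ℝ} {c : ℂ} (hΩ : Ω = 2 * ‖c‖) (hβ : β = arg (-c))
    (X : ℂ) : -(Ω : ℂ) / 2 * (-exp (I * β) * X + Ω) = -c * (X + 2 * conj c) := by
  have hphase : (Ω : ℂ) * exp (I * β) = -2 * c := by
    rw [hΩ, hβ, ← norm_neg c]
    push_cast
    rw [mul_assoc, norm_mul_exp_I_mul_arg]
    ring
  linear_combination X / 2 * hphase - ofReal_sq_eq_four_mul_mul_conj hΩ / 2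

theorem neg_half_mul_exp_neg_I_mul_add {Ω β : ℝ} {c : ℂ} (hΩ : Ω = 2 * ‖c‖)
    (hβ : β = arg (-c)) (X : ℂ) :
    -(Ω : ℂ) / 2 * (-exp (-(I * β)) * X + Ω) = -conj c * (X + 2 * c) := by
  have hphase : (Ω : ℂ) * exp (-(I * β)) = -2 * conj c := by
    rw [hΩ, hβ, ← norm_neg c]
    push_cast
    rw [mul_assoc, norm_mul_exp_neg_I_mul_arg, map_neg]
    ring
  linear_combination X / 2 * hphase - ofReal_sq_eq_four_mul_mul_conj hΩ / 2

end Complex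

theorem sq_norm_mul_inner_projAlpha {Z : Type*} [NormedAddCommGroup Z] [InnerProductSpace ℂ Z]
    (α u x : Z) :
    ((‖α‖ ^ 2 : ℝ) : ℂ) * inner ℂ u (projAlpha α x) = inner ℂ α x * inner ℂ u α := by
  rcases eq_or_ne α 0 with rfl | hα
  · simp [projAlpha]
  have : (‖α‖ : ℂ) ≠ 0 := by simpa using hα
  simp only [projAlpha, inner_smul_left, inner_smul_right, map_inv₀, conj_ofReal]
  push_cast
  field_simp

theorem det_G_eq_general {Z : Type*} [NormedAddCommGroup Z] [InnerProductSpace ℂ Z]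
    (α lam : Z) (Sp Sm : Z ≃ₗᵢ[ℂ] Z) (Δω : ℝ)
    (κ2 Ω β Γ2 : ℝ) (b : ℂ) (G : Matrix (Fin 3) (Fin 3) ℂ)
    (hΩ : Ω = 2 * ‖(inner ℂ α (Sm lam) : ℂ)‖)
    (hβ : β = Complex.arg (-(inner ℂ (Sm lam) α : ℂ)))
    (hb : b = ((κ2 / 2 * ‖α‖ ^ 2 : ℝ) : ℂ) -
      Complex.I * (((Δω : ℝ) : ℂ) - (((inner ℂ (Sp lam) (projAlpha α (Sm lam)) : ℂ)).im : ℂ)))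
    (hΓ : Γ2 = κ2 ^ 2 * ‖α‖ ^ 4 +
      4 * κ2 * ‖α‖ ^ 2 * ((inner ℂ (Sm lam) (projAlpha α (Sp lam + Sm lam)) : ℂ)).re -
      4 * ((inner ℂ (Sp lam) (projAlpha α (Sm lam)) : ℂ)).im ^ 2)
    (hG : G = !![((‖α‖ ^ 2 : ℝ) : ℂ), -((Ω : ℝ) : ℂ) / 2, -((Ω : ℝ) : ℂ) / 2;
      -Complex.exp (Complex.I * β) * (inner ℂ α (Sp lam - Sm lam) : ℂ) + ((Ω : ℝ) : ℂ), b, 0;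
      -Complex.exp (-(Complex.I * β)) * (inner ℂ (Sp lam - Sm lam) α : ℂ) + ((Ω : ℝ) : ℂ), 0,
        (starRingEnd ℂ) b]) :
    G.det = ((‖α‖ ^ 2 : ℝ) : ℂ) * (((Δω ^ 2 + Γ2 / 4 : ℝ)) : ℂ) := by
  have hΩ' : Ω = 2 * ‖(inner ℂ (Sm lam) α : ℂ)‖ := by rw [hΩ, norm_inner_symm]
  have hM := two_mul_ofReal_mul_im_mul_I (sq_norm_mul_inner_projAlpha α (Sp lam) (Sm lam))
  have hR := two_mul_ofReal_mul_re (sq_norm_mul_inner_projAlpha α (Sm lam) (Sp lam + Sm lam))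
  rw [hG, Matrix.det_fin_three_arrowhead, neg_half_mul_exp_I_mul_add hΩ' hβ,
    neg_half_mul_exp_neg_I_mul_add hΩ' hβ, hb, hΓ]
  simp only [inner_sub_right, inner_sub_left, inner_add_right, ← inner_conj_symm (Sm lam) α,
    ← inner_conj_symm α (Sp lam), map_sub, map_add, map_mul, conj_conj, conj_ofReal, conj_I]
    at hM hR ⊢
  push_cast at hM hR ⊢
  set M : ℂ := ((inner ℂ (Sp lam) (projAlpha α (Sm lam))).im : ℂ)
  set R : ℂ := ((inner ℂ (Sm lam) (projAlpha α (Sp lam + Sm lam))).re : ℂ)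
  linear_combination (I * (Δω - M)) * hM - (κ2 * ‖α‖ ^ 2 / 2) * hR -
    ‖α‖ ^ 2 * (Δω ^ 2 - M ^ 2) * I_sq

/-- `det G = ‖α‖²[(Δω)² + Γ²/4]` for the drift matrix `G` of the two-level atom master
equation, with `b = (κ²/2)‖α‖² − i(Δω − Im⟨S⁺λ|P_α S⁻λ⟩)`, `Ω = 2|⟨α|S⁻λ⟩|`,
`β = arg(−⟨S⁻λ|α⟩)` and
`Γ² = κ⁴‖α‖⁴ + 4κ²‖α‖² Re⟨S⁻λ|P_α(S⁺+S⁻)λ⟩ − 4(Im⟨S⁺λ|P_α S⁻λ⟩)²`. -/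
theorem det_G_eq {Z : Type*} [NormedAddCommGroup Z] [InnerProductSpace ℂ Z]
    (α lam : Z) (hα : α ≠ 0) (Sp Sm : Z ≃ₗᵢ[ℂ] Z) (Δω : ℝ)
    (κ2 Ω β Γ2 : ℝ) (b : ℂ) (G : Matrix (Fin 3) (Fin 3) ℂ)
    (hκ : κ2 = 1 + ‖Sp lam - Sm lam‖ ^ 2 / ‖α‖ ^ 2)
    (hΩ : Ω = 2 * ‖(inner ℂ α (Sm lam) : ℂ)‖)
    (hβ : β = Complex.arg (-(inner ℂ (Sm lam) α : ℂ)))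
    (hb : b = ((κ2 / 2 * ‖α‖ ^ 2 : ℝ) : ℂ) -
      Complex.I * (((Δω : ℝ) : ℂ) - (((inner ℂ (Sp lam) (projAlpha α (Sm lam)) : ℂ)).im : ℂ)))
    (hΓ : Γ2 = κ2 ^ 2 * ‖α‖ ^ 4 +
      4 * κ2 * ‖α‖ ^ 2 * ((inner ℂ (Sm lam) (projAlpha α (Sp lam + Sm lam)) : ℂ)).re -
      4 * ((inner ℂ (Sp lam) (projAlpha α (Sm lam)) : ℂ)).im ^ 2)
    (hG : G = !![((‖α‖ ^ 2 : ℝ) : ℂ), -((Ω : ℝ) : ℂ) / 2, -((Ω : ℝ) : ℂ) / 2;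
      -Complex.exp (Complex.I * β) * (inner ℂ α (Sp lam - Sm lam) : ℂ) + ((Ω : ℝ) : ℂ), b, 0;
      -Complex.exp (-(Complex.I * β)) * (inner ℂ (Sp lam - Sm lam) α : ℂ) + ((Ω : ℝ) : ℂ), 0,
        (starRingEnd ℂ) b]) :
    G.det = ((‖α‖ ^ 2 : ℝ) : ℂ) * (((Δω ^ 2 + Γ2 / 4 : ℝ)) : ℂ) :=
  det_G_eq_general α lam Sp Sm Δω κ2 Ω β Γ2 b G hΩ hβ hb hΓ hG
end

section
/- With the notation of the two-level atom master equation, Γ² can be rewritten as (‖α‖² + ‖P_⊥ΔSλ‖² + 2|⟨α̃|S⁻λ⟩|² − 2Re⟨S⁺λ|P_α S⁻λ⟩)² + |⟨α̃|(S⁺+S⁻)λ⟩|² [‖α‖²(1+κ²) + ‖P_⊥ΔSλ‖²], and in particular Γ² > 0 whenever ‖α‖ > 0. -/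
open Complex

open ComplexConjugate

section InnerProductSpace

variable {E : Type*} [NormedAddCommGroup E] [InnerProductSpace ℂ E]

theorem norm_sub_inner_smul_sq {u : E} (hu : ‖u‖ = 1) (x : E) :
    ‖x - inner ℂ u x • u‖ ^ 2 = ‖x‖ ^ 2 - ‖inner ℂ u x‖ ^ 2 := by
  rw [norm_sub_sq (𝕜 := ℂ), inner_smul_right, ← inner_conj_symm x u, mul_conj, norm_smul, hu,
    mul_one, normSq_eq_norm_sq]
  simp only [RCLike.re_to_complex, ofReal_re]
  ring

theorem norm_sub_projAlpha_sq {α : E} (hα : α ≠ 0) (x : E) :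
    ‖x - projAlpha α x‖ ^ 2 = ‖x‖ ^ 2 - ‖inner ℂ (((‖α‖ : ℝ)⁻¹ : ℂ) • α) x‖ ^ 2 :=
  norm_sub_inner_smul_sq (norm_smul_inv_norm hα) x

theorem inner_projAlpha (α x y : E) :
    inner ℂ y (projAlpha α x) =
      inner ℂ (((‖α‖ : ℝ)⁻¹ : ℂ) • α) x * conj (inner ℂ (((‖α‖ : ℝ)⁻¹ : ℂ) • α) y) := by
  rw [projAlpha, inner_smul_right, inner_conj_symm]

end InnerProductSpace

theorem gamma_sq_identity {p m : ℂ} {A N κ : ℝ} (hκ : κ * A ^ 2 = A ^ 2 + N + ‖p - m‖ ^ 2) :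
    κ ^ 2 * A ^ 4 + 4 * κ * A ^ 2 * ((p + m) * conj m).re - 4 * (m * conj p).im ^ 2 =
      (A ^ 2 + N + 2 * ‖m‖ ^ 2 - 2 * (m * conj p).re) ^ 2 +
        ‖p + m‖ ^ 2 * (A ^ 2 * (1 + κ) + N) := by
  linear_combination (norm := skip)
    (κ * A ^ 2 + (A ^ 2 + N + ‖p - m‖ ^ 2) + 4 * ((p + m) * conj m).re - ‖p + m‖ ^ 2) * hκ
  simp only [Complex.sq_norm, normSq_apply, mul_re, mul_im, conj_re, conj_im, add_re, add_im,
    sub_re, sub_im]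
  ring

theorem gamma_sq_pos {p m : ℂ} {A N κ : ℝ} (hA : 0 < A) (hN : 0 ≤ N) (hκ : 0 ≤ κ) :
    0 < (A ^ 2 + N + 2 * ‖m‖ ^ 2 - 2 * (m * conj p).re) ^ 2 +
      ‖p + m‖ ^ 2 * (A ^ 2 * (1 + κ) + N) := by
  rcases eq_or_ne (p + m) 0 with hpm | hpm
  · obtain rfl : p = -m := eq_neg_of_add_eq_zero_left hpm
    have hre : (m * conj (-m)).re = -‖m‖ ^ 2 := by
      rw [map_neg, mul_neg, mul_conj, neg_re, ofReal_re, normSq_eq_norm_sq]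
    rw [hre, neg_add_cancel, norm_zero, zero_pow two_ne_zero, zero_mul, add_zero]
    exact pow_pos (by linarith [pow_pos hA 2, sq_nonneg ‖m‖]) 2
  · have hW : 0 < A ^ 2 * (1 + κ) + N :=
      add_pos_of_pos_of_nonneg (mul_pos (pow_pos hA 2) (by linarith)) hN
    exact add_pos_of_nonneg_of_pos (sq_nonneg _) (mul_pos (pow_pos (norm_pos_iff.mpr hpm) 2) hW)

/-- `Γ²` can be rewritten as
`(‖α‖² + ‖P_⊥ΔSλ‖² + 2|⟨α̃|S⁻λ⟩|² − 2Re⟨S⁺λ|P_α S⁻λ⟩)²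
  + |⟨α̃|(S⁺+S⁻)λ⟩|² [‖α‖²(1+κ²) + ‖P_⊥ΔSλ‖²]`,
and in particular `Γ² > 0` whenever `‖α‖ > 0` (i.e. `α ≠ 0`). -/
theorem Gamma_sq_rewrite_pos {Z : Type*} [NormedAddCommGroup Z] [InnerProductSpace ℂ Z]
    (α lam : Z) (hα : α ≠ 0) (Sp Sm : Z ≃ₗᵢ[ℂ] Z) (κ2 Γ2 : ℝ)
    (hκ : κ2 = 1 + ‖Sp lam - Sm lam‖ ^ 2 / ‖α‖ ^ 2)
    (hΓ : Γ2 = κ2 ^ 2 * ‖α‖ ^ 4 +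
      4 * κ2 * ‖α‖ ^ 2 * ((inner ℂ (Sm lam) (projAlpha α (Sp lam + Sm lam)) : ℂ)).re -
      4 * ((inner ℂ (Sp lam) (projAlpha α (Sm lam)) : ℂ)).im ^ 2) :
    Γ2 = (‖α‖ ^ 2 + ‖(Sp lam - Sm lam) - projAlpha α (Sp lam - Sm lam)‖ ^ 2 +
        2 * ‖(inner ℂ (((‖α‖ : ℝ)⁻¹ : ℂ) • α) (Sm lam) : ℂ)‖ ^ 2 -
        2 * ((inner ℂ (Sp lam) (projAlpha α (Sm lam)) : ℂ)).re) ^ 2 +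
      ‖(inner ℂ (((‖α‖ : ℝ)⁻¹ : ℂ) • α) (Sp lam + Sm lam) : ℂ)‖ ^ 2 *
        (‖α‖ ^ 2 * (1 + κ2) +
          ‖(Sp lam - Sm lam) - projAlpha α (Sp lam - Sm lam)‖ ^ 2) ∧
    0 < Γ2 := by
  have hA : 0 < ‖α‖ := norm_pos_iff.mpr hα
  have hκ0 : 0 ≤ κ2 := by rw [hκ]; positivity
  have hκA : κ2 * ‖α‖ ^ 2 = ‖α‖ ^ 2 + ‖(Sp lam - Sm lam) - projAlpha α (Sp lam - Sm lam)‖ ^ 2 +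
      ‖inner ℂ (((‖α‖ : ℝ)⁻¹ : ℂ) • α) (Sp lam) -
        inner ℂ (((‖α‖ : ℝ)⁻¹ : ℂ) • α) (Sm lam)‖ ^ 2 := by
    rw [hκ, norm_sub_projAlpha_sq hα, inner_sub_right]
    field_simp
    ring
  rw [hΓ, inner_projAlpha, inner_projAlpha, inner_add_right, gamma_sq_identity hκA]
  exact ⟨rfl, gamma_sq_pos hA (by positivity) hκ0⟩
end

section
/- Let G' be the 3×3 complex matrix with rows (2, −η, −η), (2η e^{is} cos s, b', 0), (2η e^{−is} cos s, 0, b̄'), where b' = κ² − i(z + (η²/2) sin 2s), κ,η ≥ 0, s, z real. Then the unique solution u of G'u = (0, η, η)ᵀ has first component u₁ = η²κ²/(z² + ζ²) and second component u₂ = η(κ² + iy)/(z² + ζ²), where y = z − (η²/2) sin 2s and ζ² = (1 + η²‖P_⊥Δg‖²)² + η²(1 + κ² + η²‖P_⊥Δg‖²) with κ² = 1 + η²(sin²s + ‖P_⊥Δg‖²), for any real constant ‖P_⊥Δg‖² ≥ 0. -/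
open Complex

/-- The unique solution `u` of `G' u = (0, η, η)ᵀ`, for the reduced drift matrix `G'` of
the two-level atom (spherically symmetric atom stimulated by a collimated laser), has
first component `u₁ = η²κ²/(z² + ζ²)` and second component `u₂ = η(κ² + iy)/(z² + ζ²)`.
Here `b' = κ² − i(z + (η²/2) sin 2s)`, `y = z − (η²/2) sin 2s`,
`ζ² = (1 + η²‖P_⊥Δg‖²)² + η²(1 + κ² + η²‖P_⊥Δg‖²)`,
`κ² = 1 + η²(sin²s + ‖P_⊥Δg‖²)`, with `‖P_⊥Δg‖² ≥ 0` a fixed real parameter. -/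
theorem equilibrium_solution (η s z Pg : ℝ) (hη : 0 < η) (hPg : 0 ≤ Pg)
    (κ2 ζ2 y : ℝ) (b' : ℂ) (G' : Matrix (Fin 3) (Fin 3) ℂ)
    (hκ : κ2 = 1 + η ^ 2 * (Real.sin s ^ 2 + Pg))
    (hζ : ζ2 = (1 + η ^ 2 * Pg) ^ 2 + η ^ 2 * (1 + κ2 + η ^ 2 * Pg))
    (hy : y = z - η ^ 2 / 2 * Real.sin (2 * s))
    (hb : b' = ((κ2 : ℝ) : ℂ) - Complex.I * (((z + η ^ 2 / 2 * Real.sin (2 * s) : ℝ)) : ℂ))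
    (hG : G' = !![2, -((η : ℝ) : ℂ), -((η : ℝ) : ℂ);
      2 * ((η : ℝ) : ℂ) * Complex.exp (Complex.I * s) * ((Real.cos s : ℝ) : ℂ), b', 0;
      2 * ((η : ℝ) : ℂ) * Complex.exp (-(Complex.I * s)) * ((Real.cos s : ℝ) : ℂ), 0,
        (starRingEnd ℂ) b'])
    (u : Fin 3 → ℂ) (hu : G'.mulVec u = ![0, ((η : ℝ) : ℂ), ((η : ℝ) : ℂ)]) :
    u 0 = ((η ^ 2 * κ2 / (z ^ 2 + ζ2) : ℝ) : ℂ) ∧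
    u 1 = ((η : ℝ) : ℂ) * (((κ2 : ℝ) : ℂ) + Complex.I * ((y : ℝ) : ℂ)) /
      (((z ^ 2 + ζ2 : ℝ)) : ℂ) := by
  subst hG
  have e0 := congrFun hu 0
  have e1 := congrFun hu 1
  have e2 := congrFun hu 2
  simp [Matrix.mulVec, dotProduct, Fin.sum_univ_three] at e0 e1 e2
  have hsc : ((Real.sin s : ℂ)) ^ 2 + ((Real.cos s : ℂ)) ^ 2 = 1 := by
    norm_cast
    exact Real.sin_sq_add_cos_sq s
  have hexp1 : Complex.exp (Complex.I * s) =
      (Real.cos s : ℂ) + (Real.sin s : ℂ) * Complex.I := by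
    rw [mul_comm, Complex.exp_mul_I, ← Complex.ofReal_cos, ← Complex.ofReal_sin]
  have hexp2 : Complex.exp (-(Complex.I * s)) =
      (Real.cos s : ℂ) - (Real.sin s : ℂ) * Complex.I := by
    have h : -(Complex.I * (s : ℂ)) = ((-s : ℝ) : ℂ) * Complex.I := by push_cast; ring
    rw [h, Complex.exp_mul_I, ← Complex.ofReal_cos, ← Complex.ofReal_sin,
      Real.cos_neg, Real.sin_neg]
    push_cast; ring
  have hcos : Complex.cos (s : ℂ) = ((Real.cos s : ℝ) : ℂ) := (Complex.ofReal_cos s).symm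
  rw [hexp1, hcos] at e1
  rw [hexp2, hcos] at e2
  have hbc : (starRingEnd ℂ) b' =
      ((κ2 : ℝ) : ℂ) + Complex.I * (((z + η ^ 2 / 2 * Real.sin (2 * s) : ℝ)) : ℂ) := by
    rw [hb, map_sub, map_mul, Complex.conj_I, Complex.conj_ofReal, Complex.conj_ofReal]
    ring
  rw [hbc] at e2
  rw [hb] at e1
  rw [Real.sin_two_mul] at e1 e2 hy hb
  -- positivity of the denominator
  have hζpos : 0 < ζ2 := by
    have h2 : 0 ≤ κ2 := by
      rw [hκ]
      nlinarith [sq_nonneg η, sq_nonneg (Real.sin s), mul_nonneg (sq_nonneg η) hPg]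
    nlinarith [sq_nonneg η, mul_nonneg (sq_nonneg η) hPg]
  have hApos : 0 < z ^ 2 + ζ2 := by nlinarith [sq_nonneg z]
  have hA0 : ((z ^ 2 + ζ2 : ℝ) : ℂ) ≠ 0 := Complex.ofReal_ne_zero.mpr hApos.ne'
  have hκpos : 0 < κ2 := by
    rw [hκ]; nlinarith [sq_nonneg η, sq_nonneg (Real.sin s), mul_nonneg (sq_nonneg η) hPg]
  have hb0 : b' ≠ 0 := by
    rw [hb]
    intro h
    have hre := congrArg Complex.re h
    simp only [Complex.sub_re, Complex.ofReal_re, Complex.mul_re, Complex.I_re,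
      Complex.I_im, Complex.ofReal_im, Complex.zero_re] at hre
    nlinarith [hκpos]
  subst hκ hζ hy hb
  push_cast at e0 e1 e2 ⊢
  have hscC : Complex.sin (s : ℂ) ^ 2 + Complex.cos (s : ℂ) ^ 2 = 1 := Complex.sin_sq_add_cos_sq _
  have hI : Complex.I ^ 2 = -1 := Complex.I_sq
  push_cast at hA0 hb0
  have h1m : u 0 * ((z : ℂ) ^ 2 + ((1 + (η : ℂ) ^ 2 * Pg) ^ 2 +
        (η : ℂ) ^ 2 * (1 + (1 + (η : ℂ) ^ 2 * (Complex.sin (s : ℂ) ^ 2 + Pg)) + (η : ℂ) ^ 2 * Pg)))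
      = (η : ℂ) ^ 2 * (1 + (η : ℂ) ^ 2 * (Complex.sin (s : ℂ) ^ 2 + Pg)) := by
    linear_combination (1/2) * (((1 + (η : ℂ) ^ 2 * (Complex.sin (s : ℂ) ^ 2 + Pg)) + Complex.I * ((z : ℂ) + (η : ℂ) ^ 2 * Complex.sin (s : ℂ) * Complex.cos (s : ℂ))) * ((1 + (η : ℂ) ^ 2 * (Complex.sin (s : ℂ) ^ 2 + Pg)) - Complex.I * ((z : ℂ) + (η : ℂ) ^ 2 * Complex.sin (s : ℂ) * Complex.cos (s : ℂ))) * e0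
      + (η : ℂ) * ((1 + (η : ℂ) ^ 2 * (Complex.sin (s : ℂ) ^ 2 + Pg)) + Complex.I * ((z : ℂ) + (η : ℂ) ^ 2 * Complex.sin (s : ℂ) * Complex.cos (s : ℂ))) * e1
      + (η : ℂ) * ((1 + (η : ℂ) ^ 2 * (Complex.sin (s : ℂ) ^ 2 + Pg)) - Complex.I * ((z : ℂ) + (η : ℂ) ^ 2 * Complex.sin (s : ℂ) * Complex.cos (s : ℂ))) * e2)
      - (2 * (1 + (η : ℂ) ^ 2 * Pg) * (η : ℂ) ^ 2 + (η : ℂ) ^ 4 * Complex.sin (s : ℂ) ^ 2) * u 0 * hscC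
      + u 0 * ((z : ℂ) ^ 2 - (η : ℂ) ^ 4 * Complex.sin (s : ℂ) ^ 2 * Complex.cos (s : ℂ) ^ 2) * hI
  constructor
  · rw [eq_div_iff hA0]
    exact h1m
  · rw [eq_div_iff hA0]
    apply mul_left_cancel₀ hb0
    linear_combination ((z : ℂ) ^ 2 + ((1 + (η : ℂ) ^ 2 * Pg) ^ 2 + (η : ℂ) ^ 2 * (1 + (1 + (η : ℂ) ^ 2 * (Complex.sin (s : ℂ) ^ 2 + Pg)) + (η : ℂ) ^ 2 * Pg))) * e1
      - 2 * (η : ℂ) * (Complex.cos (s : ℂ) + Complex.I * Complex.sin (s : ℂ)) * Complex.cos (s : ℂ) * h1m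
      - (η : ℂ) * (2 * (1 + (η : ℂ) ^ 2 * Pg) * (η : ℂ) ^ 2 + (η : ℂ) ^ 4 * Complex.sin (s : ℂ) ^ 2) * hscC
      + (η : ℂ) * ((z : ℂ) ^ 2 - (η : ℂ) ^ 4 * Complex.sin (s : ℂ) ^ 2 * Complex.cos (s : ℂ) ^ 2) * hI
end
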